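/- Let ω ∈ (π, 2π) and define S = 1/2 if ω ∈ (π, 3π/2] and S = |sin ω|/2 if ω ∈ (3π/2, 2π). Let Ω = {(r cos θ, r sin θ) : 0 < r < ρ, |θ − π| < ω/2} be the sector of opening ω and radius ρ centered around direction θ = π. Then for all x, y ∈ Ω with |x − y| ≤ S|x|, the segment [x, y] = {t x + (1−t) y : t ∈ [0,1]} is contained in Ω. -/

import Mathlib

open Real

noncomputable section

abbrev E2 := EuclideanSpace ℝ (Fin 2)

/-- The open sector of radius ρ and opening ω centered around direction θ = π. -/
def sectorPi (ω ρ : ℝ) : Set E2 :=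
  {x | ∃ r θ : ℝ, 0 < r ∧ r < ρ ∧ |θ - Real.pi| < ω / 2 ∧
    x 0 = r * Real.cos θ ∧ x 1 = r * Real.sin θ}

lemma norm_sq_E2 (v : E2) : ‖v‖ ^ 2 = (v 0) ^ 2 + (v 1) ^ 2 := by
  rw [EuclideanSpace.norm_eq, Real.sq_sqrt (by positivity), Fin.sum_univ_two,
    Real.norm_eq_abs, Real.norm_eq_abs, sq_abs, sq_abs]

lemma coord1_abs_le_norm (v : E2) : |v 1| ≤ ‖v‖ := by
  have h2 : (v 1) ^ 2 ≤ ‖v‖ ^ 2 := by nlinarith [norm_sq_E2 v, sq_nonneg (v 0)]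
  calc |v 1| = Real.sqrt ((v 1) ^ 2) := (Real.sqrt_sq_eq_abs _).symm
    _ ≤ Real.sqrt (‖v‖ ^ 2) := Real.sqrt_le_sqrt h2
    _ = ‖v‖ := Real.sqrt_sq (norm_nonneg v)

lemma combo_lt (u v A B m : ℝ) (hu : u < m) (hv : v < m) (hA : 0 ≤ A) (hB : 0 ≤ B)
    (hAB : A + B = 1) : A * u + B * v < m := by
  calc A * u + B * v ≤ A * max u v + B * max u v :=
        add_le_add (mul_le_mul_of_nonneg_left (le_max_left _ _) hA)
          (mul_le_mul_of_nonneg_left (le_max_right _ _) hB)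
    _ = max u v := by rw [← add_mul, hAB, one_mul]
    _ < m := max_lt hu hv

lemma seg_halfspace {p q ρ : ℝ} {x y z : E2}
    (hx1 : p * x 0 + q * x 1 < 0) (hy1 : p * y 0 + q * y 1 < 0)
    (hx2 : ‖x‖ < ρ) (hy2 : ‖y‖ < ρ) (hz : z ∈ segment ℝ x y) :
    0 < ‖z‖ ∧ ‖z‖ < ρ ∧ p * z 0 + q * z 1 < 0 := by
  obtain ⟨a, b, ha, hb, hab, rfl⟩ := hz
  have hz0 : (a • x + b • y) 0 = a * x 0 + b * y 0 := by
    simp [PiLp.add_apply, PiLp.smul_apply, smul_eq_mul]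
  have hz1 : (a • x + b • y) 1 = a * x 1 + b * y 1 := by
    simp [PiLp.add_apply, PiLp.smul_apply, smul_eq_mul]
  have hL : p * ((a • x + b • y) 0) + q * ((a • x + b • y) 1)
      = a * (p * x 0 + q * x 1) + b * (p * y 0 + q * y 1) := by
    rw [hz0, hz1]; ring
  have hLlt : p * ((a • x + b • y) 0) + q * ((a • x + b • y) 1) < 0 := by
    rw [hL]; exact combo_lt _ _ a b 0 hx1 hy1 ha hb hab
  refine ⟨?_, ?_, hLlt⟩
  · rw [norm_pos_iff]
    intro h
    rw [h] at hLlt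
    simp at hLlt
  · have hn : ‖a • x + b • y‖ ≤ a * ‖x‖ + b * ‖y‖ := by
      calc ‖a • x + b • y‖ ≤ ‖a • x‖ + ‖b • y‖ := norm_add_le _ _
        _ = a * ‖x‖ + b * ‖y‖ := by
            rw [norm_smul, norm_smul, Real.norm_eq_abs, Real.norm_eq_abs,
              abs_of_nonneg ha, abs_of_nonneg hb]
    exact lt_of_le_of_lt hn (combo_lt _ _ a b ρ hx2 hy2 ha hb hab)

lemma mem_sectorPi_iff {ω ρ : ℝ} (hω : ω ∈ Set.Ioo Real.pi (2 * Real.pi)) (x : E2) :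
    x ∈ sectorPi ω ρ ↔ 0 < ‖x‖ ∧ ‖x‖ < ρ ∧
      (Real.sin (Real.pi - ω / 2) * x 0 - Real.cos (Real.pi - ω / 2) * x 1 < 0 ∨
       Real.sin (Real.pi - ω / 2) * x 0 + Real.cos (Real.pi - ω / 2) * x 1 < 0) := by
  obtain ⟨hω1, hω2⟩ := hω
  have hpi := Real.pi_pos
  have hβ0 : 0 < Real.pi - ω / 2 := by linarith
  have hβ2 : Real.pi - ω / 2 < Real.pi / 2 := by linarith
  constructor
  · rintro ⟨r, θ, hr, hrρ, hθ, h0, h1⟩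
    rw [abs_sub_lt_iff] at hθ
    obtain ⟨hθ1, hθ2⟩ := hθ
    have hnormsq : ‖x‖ ^ 2 = r ^ 2 := by
      rw [norm_sq_E2, h0, h1]
      linear_combination r ^ 2 * (Real.sin_sq_add_cos_sq θ)
    have hnorm : ‖x‖ = r := by
      calc ‖x‖ = Real.sqrt (‖x‖ ^ 2) := (Real.sqrt_sq (norm_nonneg x)).symm
        _ = Real.sqrt (r ^ 2) := by rw [hnormsq]
        _ = r := Real.sqrt_sq hr.le
    refine ⟨by rw [hnorm]; exact hr, by rw [hnorm]; exact hrρ, ?_⟩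
    by_cases hc : θ < Real.pi + (Real.pi - ω / 2)
    · left
      have h2 : 0 < Real.sin (θ - (Real.pi - ω / 2)) :=
        Real.sin_pos_of_pos_of_lt_pi (by linarith) (by linarith)
      rw [Real.sin_sub θ (Real.pi - ω / 2)] at h2
      rw [h0, h1]
      nlinarith [mul_pos hr h2]
    · right
      push_neg at hc
      have h2 : 0 < Real.sin (θ + (Real.pi - ω / 2) - Real.pi) :=
        Real.sin_pos_of_pos_of_lt_pi (by linarith) (by linarith)
      have h3 : Real.sin (θ + (Real.pi - ω / 2)) < 0 := by
        have e : Real.sin (θ + (Real.pi - ω / 2))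
            = -Real.sin (θ + (Real.pi - ω / 2) - Real.pi) := by
          rw [Real.sin_sub (θ + (Real.pi - ω / 2)) Real.pi, Real.cos_pi, Real.sin_pi]; ring
        rw [e]; linarith
      rw [Real.sin_add θ (Real.pi - ω / 2)] at h3
      rw [h0, h1]
      nlinarith [mul_pos hr (neg_pos.mpr h3)]
  · rintro ⟨hpos, hlt, hdisj⟩
    set z : ℂ := ⟨x 0, x 1⟩ with hzdef
    have habs : ‖z‖ = ‖x‖ := by
      rw [Complex.norm_def, hzdef, Complex.normSq_mk,
        show x 0 * x 0 + x 1 * x 1 = ‖x‖ ^ 2 by rw [norm_sq_E2]; ring]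
      exact Real.sqrt_sq (norm_nonneg x)
    have hzne : z ≠ 0 := by
      intro h
      rw [h, norm_zero] at habs
      linarith
    set θ₀ := z.arg with hθ₀def
    have harg1 : -Real.pi < θ₀ := Complex.neg_pi_lt_arg z
    have harg2 : θ₀ ≤ Real.pi := Complex.arg_le_pi z
    have hre : x 0 = ‖x‖ * Real.cos θ₀ := by
      have h : Real.cos θ₀ = x 0 / ‖x‖ := by
        rw [Complex.cos_arg hzne, habs]
      rw [h]; field_simp
    have him : x 1 = ‖x‖ * Real.sin θ₀ := by
      have h : Real.sin θ₀ = x 1 / ‖x‖ := by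
        rw [Complex.sin_arg, habs]
      rw [h]; field_simp
    rcases hdisj with h | h
    · have hsin : 0 < Real.sin (θ₀ - (Real.pi - ω / 2)) := by
        rw [Real.sin_sub θ₀ (Real.pi - ω / 2)]
        rw [hre, him] at h
        nlinarith [hpos]
      by_cases hc : Real.pi - ω / 2 < θ₀
      · exact ⟨‖x‖, θ₀, hpos, hlt,
          by rw [abs_sub_lt_iff]; constructor <;> linarith, hre, him⟩
      · push_neg at hc
        have hlt2 : θ₀ < (Real.pi - ω / 2) - Real.pi := by
          by_contra hge
          push_neg at hge
          have h4 : 0 ≤ Real.sin ((Real.pi - ω / 2) - θ₀) :=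
            Real.sin_nonneg_of_nonneg_of_le_pi (by linarith) (by linarith)
          rw [show (Real.pi - ω / 2) - θ₀ = -(θ₀ - (Real.pi - ω / 2)) by ring,
            Real.sin_neg] at h4
          linarith
        refine ⟨‖x‖, θ₀ + 2 * Real.pi, hpos, hlt,
          by rw [abs_sub_lt_iff]; constructor <;> linarith,
          by rw [Real.cos_add_two_pi]; exact hre,
          by rw [Real.sin_add_two_pi]; exact him⟩
    · have hsin : Real.sin (θ₀ + (Real.pi - ω / 2)) < 0 := by
        rw [Real.sin_add θ₀ (Real.pi - ω / 2)]
        rw [hre, him] at h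
        nlinarith [hpos]
      by_cases hc : Real.pi - (Real.pi - ω / 2) < θ₀
      · exact ⟨‖x‖, θ₀, hpos, hlt,
          by rw [abs_sub_lt_iff]; constructor <;> linarith, hre, him⟩
      · push_neg at hc
        have hneg : θ₀ < -(Real.pi - ω / 2) := by
          by_contra hge
          push_neg at hge
          have h4 : 0 ≤ Real.sin (θ₀ + (Real.pi - ω / 2)) :=
            Real.sin_nonneg_of_nonneg_of_le_pi (by linarith) (by linarith)
          linarith
        refine ⟨‖x‖, θ₀ + 2 * Real.pi, hpos, hlt,
          by rw [abs_sub_lt_iff]; constructor <;> linarith,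
          by rw [Real.cos_add_two_pi]; exact hre,
          by rw [Real.sin_add_two_pi]; exact him⟩

lemma coord_ge {s c : ℝ} (hs : 0 < s) (hc : 0 < c) (hsc : s ^ 2 + c ^ 2 = 1) (x : E2)
    (h1 : s * x 0 - c * x 1 < 0) (h2 : 0 ≤ s * x 0 + c * x 1) : s * ‖x‖ ≤ x 1 := by
  have hn := norm_sq_E2 x
  have hx1 : 0 < x 1 := by nlinarith
  have key : s ^ 2 * (x 0) ^ 2 ≤ c ^ 2 * (x 1) ^ 2 := by
    nlinarith [mul_nonneg (le_of_lt (by linarith : (0:ℝ) < c * x 1 - s * x 0))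
      (by linarith : (0:ℝ) ≤ c * x 1 + s * x 0)]
  have hfin : (s * ‖x‖) ^ 2 ≤ (x 1) ^ 2 := by
    have e1 : (s * ‖x‖) ^ 2 = s ^ 2 * (x 0) ^ 2 + s ^ 2 * (x 1) ^ 2 := by
      rw [mul_pow, hn]; ring
    have e2 : s ^ 2 * (x 1) ^ 2 + c ^ 2 * (x 1) ^ 2 = (x 1) ^ 2 := by
      have e : s ^ 2 * (x 1) ^ 2 + c ^ 2 * (x 1) ^ 2 = (s ^ 2 + c ^ 2) * (x 1) ^ 2 := by ring
      rw [e, hsc, one_mul]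
    linarith
  have hnng : 0 ≤ s * ‖x‖ := mul_nonneg hs.le (norm_nonneg x)
  calc s * ‖x‖ = Real.sqrt ((s * ‖x‖) ^ 2) := (Real.sqrt_sq hnng).symm
    _ ≤ Real.sqrt ((x 1) ^ 2) := Real.sqrt_le_sqrt hfin
    _ = x 1 := Real.sqrt_sq hx1.le

lemma coord_ge' {s c : ℝ} (hs : 0 < s) (hc : 0 < c) (hsc : s ^ 2 + c ^ 2 = 1) (x : E2)
    (h1 : s * x 0 + c * x 1 < 0) (h2 : 0 ≤ s * x 0 - c * x 1) : s * ‖x‖ ≤ -(x 1) := by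
  have hn := norm_sq_E2 x
  have hx1 : x 1 < 0 := by nlinarith
  have key : s ^ 2 * (x 0) ^ 2 ≤ c ^ 2 * (x 1) ^ 2 := by
    nlinarith [mul_nonneg (le_of_lt (by linarith : (0:ℝ) < -(c * x 1) - s * x 0))
      (by linarith : (0:ℝ) ≤ -(c * x 1) + s * x 0)]
  have hfin : (s * ‖x‖) ^ 2 ≤ (x 1) ^ 2 := by
    have e1 : (s * ‖x‖) ^ 2 = s ^ 2 * (x 0) ^ 2 + s ^ 2 * (x 1) ^ 2 := by
      rw [mul_pow, hn]; ring
    have e2 : s ^ 2 * (x 1) ^ 2 + c ^ 2 * (x 1) ^ 2 = (x 1) ^ 2 := by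
      have e : s ^ 2 * (x 1) ^ 2 + c ^ 2 * (x 1) ^ 2 = (s ^ 2 + c ^ 2) * (x 1) ^ 2 := by ring
      rw [e, hsc, one_mul]
    linarith
  have hnng : 0 ≤ s * ‖x‖ := mul_nonneg hs.le (norm_nonneg x)
  calc s * ‖x‖ = Real.sqrt ((s * ‖x‖) ^ 2) := (Real.sqrt_sq hnng).symm
    _ ≤ Real.sqrt ((x 1) ^ 2) := Real.sqrt_le_sqrt hfin
    _ = |x 1| := Real.sqrt_sq_eq_abs _
    _ = -(x 1) := abs_of_neg hx1

/-- If ω ∈ (π, 2π), S = 1/2 for ω ≤ 3π/2 and |sin ω|/2 otherwise, then any two points of the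
sector at distance at most S|x| are joined by a segment lying in the sector. -/
theorem segment_subset_sector (ω ρ : ℝ) (hω : ω ∈ Set.Ioo Real.pi (2 * Real.pi))
    (hρ : 0 < ρ)
    (S : ℝ) (hS : S = if ω ≤ 3 * Real.pi / 2 then 1/2 else |Real.sin ω| / 2)
    (x y : E2) (hx : x ∈ sectorPi ω ρ) (hy : y ∈ sectorPi ω ρ)
    (hxy : ‖x - y‖ ≤ S * ‖x‖) :
    segment ℝ x y ⊆ sectorPi ω ρ := by
  obtain ⟨hω1, hω2⟩ := hω
  have hpi := Real.pi_pos
  have hβ0 : 0 < Real.pi - ω / 2 := by linarith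
  have hβ2 : Real.pi - ω / 2 < Real.pi / 2 := by linarith
  have hs : 0 < Real.sin (Real.pi - ω / 2) :=
    Real.sin_pos_of_pos_of_lt_pi hβ0 (by linarith)
  have hc : 0 < Real.cos (Real.pi - ω / 2) :=
    Real.cos_pos_of_mem_Ioo ⟨by linarith, hβ2⟩
  have hsc : Real.sin (Real.pi - ω / 2) ^ 2 + Real.cos (Real.pi - ω / 2) ^ 2 = 1 :=
    Real.sin_sq_add_cos_sq _
  have hc1 : Real.cos (Real.pi - ω / 2) < 1 := by
    have h := Real.cos_lt_cos_of_nonneg_of_le_pi (le_refl (0:ℝ)) (by linarith) hβ0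
    rwa [Real.cos_zero] at h
  have hSs : S < Real.sin (Real.pi - ω / 2) := by
    rw [hS]; split_ifs with h
    · have h4 : Real.pi / 4 ≤ Real.pi - ω / 2 := by linarith
      have h5 : Real.sin (Real.pi / 4) ≤ Real.sin (Real.pi - ω / 2) := by
        apply Real.strictMonoOn_sin.monotoneOn (Set.mem_Icc.mpr ⟨by linarith, by linarith⟩)
          (Set.mem_Icc.mpr ⟨by linarith, by linarith⟩) h4
      rw [Real.sin_pi_div_four] at h5
      have h6 : (1:ℝ) < Real.sqrt 2 := by
        have : Real.sqrt 1 < Real.sqrt 2 := Real.sqrt_lt_sqrt (by norm_num) (by norm_num)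
        simpa using this
      linarith
    · push_neg at h
      have e1 : Real.sin ω = -Real.sin (2 * (Real.pi - ω / 2)) := by
        rw [show (2:ℝ) * (Real.pi - ω / 2) = 2 * Real.pi - ω by ring, Real.sin_sub]
        simp
      have e2 : 0 < Real.sin (2 * (Real.pi - ω / 2)) :=
        Real.sin_pos_of_pos_of_lt_pi (by linarith) (by linarith)
      rw [e1, abs_neg, abs_of_pos e2, Real.sin_two_mul]
      nlinarith [mul_lt_mul_of_pos_left hc1 hs]
  have hx' := (mem_sectorPi_iff ⟨hω1, hω2⟩ x).mp hx
  have hy' := (mem_sectorPi_iff ⟨hω1, hω2⟩ y).mp hy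
  obtain ⟨hx0, hxρ, hxd⟩ := hx'
  obtain ⟨hy0, hyρ, hyd⟩ := hy'
  intro z hz
  rw [mem_sectorPi_iff ⟨hω1, hω2⟩]
  have hsub1 : (x - y) 1 = x 1 - y 1 := rfl
  have hcd : |x 1 - y 1| ≤ ‖x - y‖ := by
    have := coord1_abs_le_norm (x - y)
    rwa [hsub1] at this
  by_cases hxm : Real.sin (Real.pi - ω / 2) * x 0 - Real.cos (Real.pi - ω / 2) * x 1 < 0
  · by_cases hym : Real.sin (Real.pi - ω / 2) * y 0 - Real.cos (Real.pi - ω / 2) * y 1 < 0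
    · obtain ⟨h1, h2, h3⟩ := seg_halfspace (p := Real.sin (Real.pi - ω / 2))
        (q := -(Real.cos (Real.pi - ω / 2))) (by linarith) (by linarith) hxρ hyρ hz
      exact ⟨h1, h2, Or.inl (by linarith)⟩
    · by_cases hxp : Real.sin (Real.pi - ω / 2) * x 0 + Real.cos (Real.pi - ω / 2) * x 1 < 0
      · have hyp : Real.sin (Real.pi - ω / 2) * y 0 + Real.cos (Real.pi - ω / 2) * y 1 < 0 :=
          hyd.resolve_left hym
        obtain ⟨h1, h2, h3⟩ := seg_halfspace (p := Real.sin (Real.pi - ω / 2))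
          (q := Real.cos (Real.pi - ω / 2)) hxp hyp hxρ hyρ hz
        exact ⟨h1, h2, Or.inr h3⟩
      · exfalso
        have hyp : Real.sin (Real.pi - ω / 2) * y 0 + Real.cos (Real.pi - ω / 2) * y 1 < 0 :=
          hyd.resolve_left hym
        have h1 := coord_ge hs hc hsc x hxm (not_lt.mp hxp)
        have h2 := coord_ge' hs hc hsc y hyp (not_lt.mp hym)
        have h3 : x 1 - y 1 ≤ S * ‖x‖ := le_trans (le_abs_self _) (hcd.trans hxy)
        nlinarith [mul_pos (sub_pos.mpr hSs) hx0,
          mul_nonneg hs.le (norm_nonneg y)]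
  · have hxp : Real.sin (Real.pi - ω / 2) * x 0 + Real.cos (Real.pi - ω / 2) * x 1 < 0 :=
      hxd.resolve_left hxm
    by_cases hyp : Real.sin (Real.pi - ω / 2) * y 0 + Real.cos (Real.pi - ω / 2) * y 1 < 0
    · obtain ⟨h1, h2, h3⟩ := seg_halfspace (p := Real.sin (Real.pi - ω / 2))
        (q := Real.cos (Real.pi - ω / 2)) hxp hyp hxρ hyρ hz
      exact ⟨h1, h2, Or.inr h3⟩
    · exfalso
      have hym : Real.sin (Real.pi - ω / 2) * y 0 - Real.cos (Real.pi - ω / 2) * y 1 < 0 :=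
        hyd.resolve_right hyp
      have h1 := coord_ge hs hc hsc y hym (not_lt.mp hyp)
      have h2 := coord_ge' hs hc hsc x hxp (not_lt.mp hxm)
      have h3 : y 1 - x 1 ≤ S * ‖x‖ := by
        have := le_trans (neg_le_abs _) (hcd.trans hxy)
        linarith
      nlinarith [mul_pos (sub_pos.mpr hSs) hx0,
        mul_nonneg hs.le (norm_nonneg y)]

end
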